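/- (Necessity of the solvability condition.) Let A : ℝ → ℝ be continuous and bounded, and suppose ψ : ℝ → ℝ is a C² function such that ψ and ψ' are bounded on ℝ and −ψ''(ρ) − (1 − 3θ₀(ρ)²) ψ(ρ) = A(ρ) for all ρ ∈ ℝ. Then the integral ∫_ℝ A(ρ) θ₀'(ρ) dρ is absolutely convergent and equals 0. -/

import Mathlib

open MeasureTheory

/-- The standing wave profile `θ₀(ρ) = tanh(ρ/√2)`. -/
noncomputable def θ₀ (ρ : ℝ) : ℝ := Real.tanh (ρ / Real.sqrt 2)

/-! Differentiating `θ₀'' + f(θ₀) = 0` shows `L θ₀' = 0`, so the Wronskian `W = ψ' θ₀' - ψ θ₀''`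
satisfies `W' = -A θ₀'`. As `ψ, ψ'` are bounded and `θ₀', θ₀''` vanish at `±∞`, `W` vanishes at
both ends, and `∫ A θ₀' = W(-∞) - W(+∞) = 0`; the integral converges absolutely because
`θ₀' ≥ 0` is the derivative of a bounded monotone function. -/

open Filter Set Topology

namespace Real

theorem hasDerivAt_tanh (x : ℝ) : HasDerivAt tanh (1 - tanh x ^ 2) x := by
  have h := (hasDerivAt_sinh x).div (hasDerivAt_cosh x) (cosh_pos x).ne'
  rw [show sinh / cosh = tanh from funext fun y => (tanh_eq_sinh_div_cosh y).symm] at h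
  refine h.congr_deriv ?_
  have hc := (cosh_pos x).ne'
  rw [tanh_eq_sinh_div_cosh]
  field_simp

theorem tanh_eq_one_sub_two_div (x : ℝ) : tanh x = 1 - 2 / (exp (2 * x) + 1) := by
  have h := exp_pos x
  rw [tanh_eq_sinh_div_cosh, sinh_eq, cosh_eq, show 2 * x = x + x by ring, exp_add, exp_neg]
  field_simp
  ring

theorem tendsto_tanh_atTop : Tendsto tanh atTop (𝓝 1) := by
  have hexp : Tendsto (fun x => exp (2 * x) + 1) atTop atTop :=
    tendsto_atTop_add_const_right _ 1 (tendsto_exp_atTop.comp (tendsto_id.const_mul_atTop two_pos))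
  simpa [← tanh_eq_one_sub_two_div] using (hexp.const_div_atTop 2).const_sub 1

theorem tendsto_tanh_atBot : Tendsto tanh atBot (𝓝 (-1)) := by
  simpa [Function.comp_def] using (tendsto_tanh_atTop.comp tendsto_neg_atBot_atTop).neg

end Real

theorem integrable_of_hasDerivAt_of_nonneg {g g' : ℝ → ℝ} {a b : ℝ}
    (hderiv : ∀ x, HasDerivAt g (g' x) x) (hg' : ∀ x, 0 ≤ g' x)
    (hbot : Tendsto g atBot (𝓝 a)) (htop : Tendsto g atTop (𝓝 b)) : Integrable g' := by
  have hIoi : IntegrableOn g' (Ioi 0) :=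
    integrableOn_Ioi_deriv_of_nonneg' (fun x _ => hderiv x) (fun x _ => hg' x) htop
  have hIio : IntegrableOn (fun x => g' (-x)) (Ioi 0) := by
    have hderiv_neg (x : ℝ) : HasDerivAt (fun x => -g (-x)) (g' (-x)) x := by
      have h := ((hderiv (-x)).comp x (hasDerivAt_neg x)).neg
      rwa [mul_neg_one, neg_neg] at h
    exact integrableOn_Ioi_deriv_of_nonneg' (fun x _ => hderiv_neg x)
      (fun x _ => hg' (-x)) (hbot.comp tendsto_neg_atTop_atBot).neg
  rw [← integrableOn_univ, ← Iio_union_Ici (a := (0 : ℝ)), integrableOn_union,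
    integrableOn_Ici_iff_integrableOn_Ioi]
  refine ⟨?_, hIoi⟩
  rw [← neg_zero] at hIio
  simpa only [neg_neg] using hIio.comp_neg_Iio

section Wronskian

variable {V A ψ ψ' ψ'' φ φ' : ℝ → ℝ}

theorem tendsto_mul_sub_mul_of_bounded {l : Filter ℝ} (hψ_bdd : ∃ C, ∀ x, |ψ x| ≤ C)
    (hψ'_bdd : ∃ C, ∀ x, |ψ' x| ≤ C) (hφ : Tendsto φ l (𝓝 0)) (hφ' : Tendsto φ' l (𝓝 0)) :
    Tendsto (fun x => ψ' x * φ x - ψ x * φ' x) l (𝓝 0) := by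
  obtain ⟨C, hC⟩ := hψ_bdd
  obtain ⟨C', hC'⟩ := hψ'_bdd
  simpa using (isBoundedUnder_le_mul_tendsto_zero (isBoundedUnder_of ⟨C', hC'⟩) hφ).sub
    (isBoundedUnder_le_mul_tendsto_zero (isBoundedUnder_of ⟨C, hC⟩) hφ')

theorem integral_mul_eq_zero_of_hasDerivAt_of_tendsto
    (hψ : ∀ x, HasDerivAt ψ (ψ' x) x) (hψ' : ∀ x, HasDerivAt ψ' (ψ'' x) x)
    (hφ : ∀ x, HasDerivAt φ (φ' x) x) (hφ' : ∀ x, HasDerivAt φ' (-(V x * φ x)) x)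
    (heq : ∀ x, -ψ'' x - V x * ψ x = A x)
    (hψ_bdd : ∃ C, ∀ x, |ψ x| ≤ C) (hψ'_bdd : ∃ C, ∀ x, |ψ' x| ≤ C)
    (hφ_bot : Tendsto φ atBot (𝓝 0)) (hφ_top : Tendsto φ atTop (𝓝 0))
    (hφ'_bot : Tendsto φ' atBot (𝓝 0)) (hφ'_top : Tendsto φ' atTop (𝓝 0))
    (hAφ : Integrable fun x => A x * φ x) :
    ∫ x, A x * φ x = 0 := by
  have hW (x : ℝ) : HasDerivAt (fun x => ψ' x * φ x - ψ x * φ' x) (-(A x * φ x)) x := by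
    refine (((hψ' x).mul (hφ x)).sub ((hψ x).mul (hφ' x))).congr_deriv ?_
    rw [← heq x]
    ring
  have h := integral_of_hasDerivAt_of_tendsto hW hAφ.neg
    (tendsto_mul_sub_mul_of_bounded hψ_bdd hψ'_bdd hφ_bot hφ'_bot)
    (tendsto_mul_sub_mul_of_bounded hψ_bdd hψ'_bdd hφ_top hφ'_top)
  rwa [integral_neg, sub_zero, neg_eq_zero] at h

end Wronskian

/-! The derivatives `θ₀'` and `θ₀'' = -f(θ₀)`, written as polynomials in `θ₀`. -/

noncomputable def θ₁ (ρ : ℝ) : ℝ := (1 - θ₀ ρ ^ 2) / Real.sqrt 2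

noncomputable def θ₂ (ρ : ℝ) : ℝ := -(θ₀ ρ * (1 - θ₀ ρ ^ 2))

theorem hasDerivAt_θ₀ (ρ : ℝ) : HasDerivAt θ₀ (θ₁ ρ) ρ := by
  have h := (Real.hasDerivAt_tanh (ρ / Real.sqrt 2)).comp ρ ((hasDerivAt_id ρ).div_const _)
  refine h.congr_deriv ?_
  simp only [θ₁, θ₀]
  ring

theorem hasDerivAt_θ₁ (ρ : ℝ) : HasDerivAt θ₁ (θ₂ ρ) ρ := by
  refine ((((hasDerivAt_θ₀ ρ).pow 2).const_sub 1).div_const (Real.sqrt 2)).congr_deriv ?_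
  have h2 : Real.sqrt 2 ^ 2 = 2 := Real.sq_sqrt zero_le_two
  have hne : Real.sqrt 2 ≠ 0 := by positivity
  simp only [θ₁, θ₂]
  field_simp
  linear_combination θ₀ ρ * (1 - θ₀ ρ ^ 2) * h2

/-- `θ₀'` lies in the kernel of `L`. -/
theorem hasDerivAt_θ₂ (ρ : ℝ) : HasDerivAt θ₂ (-((1 - 3 * θ₀ ρ ^ 2) * θ₁ ρ)) ρ := by
  refine (((hasDerivAt_θ₀ ρ).mul (((hasDerivAt_θ₀ ρ).pow 2).const_sub 1)).neg).congr_deriv ?_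
  simp only [Pi.pow_apply]
  push_cast
  ring

theorem θ₁_nonneg (ρ : ℝ) : 0 ≤ θ₁ ρ :=
  div_nonneg (sub_nonneg.mpr (Real.tanh_sq_lt_one _).le) (Real.sqrt_nonneg 2)

theorem tendsto_θ₀_atTop : Tendsto θ₀ atTop (𝓝 1) :=
  Real.tendsto_tanh_atTop.comp (tendsto_id.atTop_div_const (by positivity))

theorem tendsto_θ₀_atBot : Tendsto θ₀ atBot (𝓝 (-1)) :=
  Real.tendsto_tanh_atBot.comp (tendsto_id.atBot_div_const (by positivity))

theorem tendsto_θ₁ {l : Filter ℝ} {c : ℝ} (hc : c ^ 2 = 1) (h : Tendsto θ₀ l (𝓝 c)) :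
    Tendsto θ₁ l (𝓝 0) := by
  have h' := ((h.pow 2).const_sub 1).div_const (Real.sqrt 2)
  rwa [hc, sub_self, zero_div] at h'

theorem tendsto_θ₂ {l : Filter ℝ} {c : ℝ} (hc : c ^ 2 = 1) (h : Tendsto θ₀ l (𝓝 c)) :
    Tendsto θ₂ l (𝓝 0) := by
  have h' := (h.mul ((h.pow 2).const_sub 1)).neg
  rwa [hc, sub_self, mul_zero, neg_zero] at h'

theorem integrable_θ₁ : Integrable θ₁ :=
  integrable_of_hasDerivAt_of_nonneg hasDerivAt_θ₀ θ₁_nonneg tendsto_θ₀_atBot tendsto_θ₀_atTop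

/-- Necessity of the solvability condition: if a `C²` function `ψ`, bounded
together with its first derivative, solves `-ψ'' - (1 - 3θ₀²)ψ = A` with `A`
continuous and bounded, then `∫_ℝ A θ₀' = 0` (the integral being absolutely
convergent). -/
theorem solvability_condition_necessary (A ψ : ℝ → ℝ)
    (hA_cont : Continuous A) (hA_bdd : ∃ C : ℝ, ∀ ρ : ℝ, |A ρ| ≤ C)
    (hψ : ContDiff ℝ 2 ψ)
    (hψ_bdd : ∃ C : ℝ, ∀ ρ : ℝ, |ψ ρ| ≤ C)
    (hψ'_bdd : ∃ C : ℝ, ∀ ρ : ℝ, |deriv ψ ρ| ≤ C)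
    (heq : ∀ ρ : ℝ, -deriv (deriv ψ) ρ - (1 - 3 * θ₀ ρ ^ 2) * ψ ρ = A ρ) :
    Integrable (fun ρ : ℝ => A ρ * deriv θ₀ ρ) ∧
    (∫ ρ : ℝ, A ρ * deriv θ₀ ρ) = 0 := by
  obtain ⟨CA, hCA⟩ := hA_bdd
  have hψ' : ContDiff ℝ 1 (deriv ψ) :=
    ((contDiff_succ_iff_deriv (n := 1)).mp (by exact_mod_cast hψ)).2.2
  rw [show deriv θ₀ = θ₁ from funext fun ρ => (hasDerivAt_θ₀ ρ).deriv]
  have hint : Integrable fun ρ => A ρ * θ₁ ρ :=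
    integrable_θ₁.bdd_mul hA_cont.aestronglyMeasurable (.of_forall hCA)
  refine ⟨hint, integral_mul_eq_zero_of_hasDerivAt_of_tendsto
    (fun ρ => (hψ.differentiable two_ne_zero ρ).hasDerivAt)
    (fun ρ => (hψ'.differentiable one_ne_zero ρ).hasDerivAt)
    hasDerivAt_θ₁ hasDerivAt_θ₂ heq hψ_bdd hψ'_bdd
    (tendsto_θ₁ (by norm_num) tendsto_θ₀_atBot) (tendsto_θ₁ (by norm_num) tendsto_θ₀_atTop)
    (tendsto_θ₂ (by norm_num) tendsto_θ₀_atBot)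
    (tendsto_θ₂ (by norm_num) tendsto_θ₀_atTop) hint⟩
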